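/- Suppose the constant step size satisfies α ≤ 2/L. Then for every epoch k and every 0 ≤ i ≤ n−1, E[‖x_{i+1}^k − x*‖²] ≤ E[‖x_i^k − x*‖²] − 2α·E[F(x_i^k) − F(x*)] + 5α²G². -/

import Mathlib

open Finset MeasureTheory ProbabilityTheory RealInnerProductSpace

noncomputable section

abbrev Vec (d : ℕ) : Type := EuclideanSpace ℝ (Fin d)

/-- The objective `F(x) = (1/n) ∑ i, f(x; i)`. -/
def avgF {d n : ℕ} (f : Fin n → Vec d → ℝ) : Vec d → ℝ :=
  fun x => (∑ i, f i x) / n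

/-- SGDo iterates with constant step size `α`, flattened over epochs:
`σ j` is the permutation used during epoch `j + 1`, and at total step `t`
(the `t % n`-th step of epoch `t / n + 1`) we take a gradient step on the
component selected by the permutation of the current epoch. -/
def sgdoSeq {d n : ℕ} (hn : 0 < n) (f : Fin n → Vec d → ℝ) (α : ℝ)
    (x0 : Vec d) (σ : ℕ → Equiv.Perm (Fin n)) : ℕ → Vec d
  | 0 => x0
  | t + 1 =>
      sgdoSeq hn f α x0 σ t
        - α • gradient (f (σ (t / n) ⟨t % n, Nat.mod_lt t hn⟩)) (sgdoSeq hn f α x0 σ t)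

/-- `x_i^k`, for epoch `k ≥ 1` and within-epoch index `0 ≤ i ≤ n`. -/
def sgdoIter {d n : ℕ} (hn : 0 < n) (f : Fin n → Vec d → ℝ) (α : ℝ)
    (x0 : Vec d) (σ : ℕ → Equiv.Perm (Fin n)) (k i : ℕ) : Vec d :=
  sgdoSeq hn f α x0 σ ((k - 1) * n + i)

/-- Extend a `K`-tuple of permutations to `ℕ` (junk value beyond `K`). -/
def extendPerm {n K : ℕ} (ω : Fin K → Equiv.Perm (Fin n)) : ℕ → Equiv.Perm (Fin n) :=
  fun j => if h : j < K then ω ⟨j, h⟩ else 1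

/-- Expectation of `g` under the uniform distribution on a finite type. -/
def unifExp {Ω : Type*} [Fintype Ω] (g : Ω → ℝ) : ℝ :=
  (∑ ω, g ω) / (Fintype.card Ω)

instance permMeasurableSpace {n : ℕ} : MeasurableSpace (Equiv.Perm (Fin n)) := ⊤

/-- The uniform probability measure on a finite type. -/
def unifMeasure (Ω : Type*) [MeasurableSpace Ω] [Fintype Ω] [Nonempty Ω] : Measure Ω :=
  (PMF.uniformOfFintype Ω).toMeasure

/-- Wasserstein-1 distance between measures on `ℝ^d`, as an infimum over couplings. -/
def W1dist {d : ℕ} (P Q : Measure (Vec d)) : ℝ :=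
  sInf { c | ∃ μ : Measure (Vec d × Vec d), IsProbabilityMeasure μ ∧
    μ.map Prod.fst = P ∧ μ.map Prod.snd = Q ∧ c = ∫ p, ‖p.1 - p.2‖ ∂μ }

/-- Wasserstein-2 distance between measures on `ℝ^d`, as an infimum over couplings. -/
def W2dist {d : ℕ} (P Q : Measure (Vec d)) : ℝ :=
  sInf { c | ∃ μ : Measure (Vec d × Vec d), IsProbabilityMeasure μ ∧
    μ.map Prod.fst = P ∧ μ.map Prod.snd = Q ∧ c = Real.sqrt (∫ p, ‖p.1 - p.2‖ ^ 2 ∂μ) }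

lemma grad_fderiv {d : ℕ} {φ : Vec d → ℝ} (hφ : Differentiable ℝ φ) (x : Vec d) :
    HasFDerivAt φ (InnerProductSpace.toDual ℝ (Vec d) (gradient φ x)) x :=
  (hφ x).hasGradientAt.hasFDerivAt

lemma hasDerivAt_comp_line {d : ℕ} {φ : Vec d → ℝ} (hφ : Differentiable ℝ φ)
    (x v : Vec d) (t : ℝ) :
    HasDerivAt (fun s : ℝ => φ (x + s • v)) ⟪gradient φ (x + t • v), v⟫ t := by
  have h1 : HasDerivAt (fun s : ℝ => x + s • v) v t := by
    simpa using ((hasDerivAt_id t).smul_const v).const_add x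
  have h2 := (grad_fderiv hφ (x + t • v)).comp_hasDerivAt t h1
  simpa [InnerProductSpace.toDual_apply_apply, Function.comp_def] using h2

/-- first-order condition for convexity -/
lemma convex_first_order {d : ℕ} {φ : Vec d → ℝ} (hφ : Differentiable ℝ φ)
    (hc : ConvexOn ℝ Set.univ φ) (x y : Vec d) :
    φ x + ⟪gradient φ x, y - x⟫ ≤ φ y := by
  have hg : ConvexOn ℝ Set.univ (fun s : ℝ => φ (x + s • (y - x))) := by
    have h0 := hc.comp_affineMap (AffineMap.lineMap x y)
    have he : (fun s : ℝ => φ (x + s • (y - x))) = (φ ∘ (AffineMap.lineMap x y)) := by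
      funext s; simp [AffineMap.lineMap_apply, add_comm]
    rw [he]
    simpa using h0
  have hd : HasDerivAt (fun s : ℝ => φ (x + s • (y - x))) ⟪gradient φ x, y - x⟫ 0 := by
    simpa using hasDerivAt_comp_line hφ x (y - x) 0
  have hs := hg.le_slope_of_hasDerivAt (Set.mem_univ 0) (Set.mem_univ 1) one_pos hd
  rw [slope_def_field] at hs
  simp only [zero_smul, add_zero, one_smul, add_sub_cancel, sub_zero, div_one] at hs
  linarith

/-- descent lemma -/
lemma descent_lemma {d : ℕ} {φ : Vec d → ℝ} (hφ : Differentiable ℝ φ) {L : ℝ} (hL : 0 ≤ L)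
    (hLs : ∀ a b : Vec d, ‖gradient φ a - gradient φ b‖ ≤ L * ‖a - b‖) (x y : Vec d) :
    φ y ≤ φ x + ⟪gradient φ x, y - x⟫ + L / 2 * ‖y - x‖ ^ 2 := by
  set v := y - x with hv
  set a : ℝ := ⟪gradient φ x, v⟫ with ha
  set C : ℝ := L * ‖v‖ ^ 2 with hC
  set h : ℝ → ℝ := fun t => φ (x + t • v) - t * a - C * t ^ 2 / 2 with hh
  have hder : ∀ t : ℝ, HasDerivAt h (⟪gradient φ (x + t • v), v⟫ - a - C * t) t := by
    intro t
    have d1 := hasDerivAt_comp_line hφ x v t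
    have d2 : HasDerivAt (fun t : ℝ => t * a) a t := by
      simpa using (hasDerivAt_id t).mul_const a
    have d3 : HasDerivAt (fun t : ℝ => C * t ^ 2 / 2) (C * t) t := by
      have := ((hasDerivAt_pow 2 t).const_mul C).div_const 2
      exact this.congr_deriv (by norm_num; ring)
    exact (d1.sub d2).sub d3
  have hmono : AntitoneOn h (Set.Icc (0:ℝ) 1) := by
    apply antitoneOn_of_deriv_nonpos (convex_Icc 0 1)
    · exact fun t _ => ((hder t).continuousAt).continuousWithinAt
    · exact fun t _ => ((hder t).differentiableAt).differentiableWithinAt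
    · intro t ht
      rw [interior_Icc] at ht
      rw [(hder t).deriv]
      have hb : ⟪gradient φ (x + t • v), v⟫ - a ≤ C * t := by
        have h1 : ⟪gradient φ (x + t • v) - gradient φ x, v⟫
            ≤ ‖gradient φ (x + t • v) - gradient φ x‖ * ‖v‖ :=
          real_inner_le_norm _ _
        have h2 : ‖gradient φ (x + t • v) - gradient φ x‖ ≤ L * (t * ‖v‖) := by
          have := hLs (x + t • v) x
          simpa [norm_smul, abs_of_pos ht.1] using this
        have h3 : ‖gradient φ (x + t • v) - gradient φ x‖ * ‖v‖ ≤ L * (t * ‖v‖) * ‖v‖ :=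
          mul_le_mul_of_nonneg_right h2 (norm_nonneg _)
        have h4 : ⟪gradient φ (x + t • v), v⟫ - a = ⟪gradient φ (x + t • v) - gradient φ x, v⟫ := by
          rw [inner_sub_left]
        rw [h4]
        calc _ ≤ L * (t * ‖v‖) * ‖v‖ := le_trans h1 h3
        _ = C * t := by rw [hC]; ring
      linarith
  have h01 := hmono (Set.mem_Icc.mpr ⟨le_refl 0, zero_le_one⟩)
      (Set.mem_Icc.mpr ⟨zero_le_one, le_refl 1⟩) zero_le_one
  have e0 : h 0 = φ x := by simp [hh]
  have e1 : h 1 = φ y - a - C / 2 := by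
    simp [hh, hv]
  rw [e0, e1] at h01
  have : L / 2 * ‖y - x‖ ^ 2 = C / 2 := by rw [hC, hv]; ring
  rw [this]
  linarith

/-- co-coercivity auxiliary -/
lemma cocoercive_aux {d : ℕ} {φ : Vec d → ℝ} (hφ : Differentiable ℝ φ)
    (hc : ConvexOn ℝ Set.univ φ) {L : ℝ} (hL : 0 < L)
    (hLs : ∀ a b : Vec d, ‖gradient φ a - gradient φ b‖ ≤ L * ‖a - b‖) (x y : Vec d) :
    φ y + ⟪gradient φ y, x - y⟫ + 1 / (2 * L) * ‖gradient φ x - gradient φ y‖ ^ 2 ≤ φ x := by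
  set g := gradient φ x - gradient φ y with hg
  set z := x - (1 / L) • g with hz
  have h1 := descent_lemma hφ hL.le hLs x z
  have h2 := convex_first_order hφ hc y z
  have ezx : z - x = -((1/L) • g) := by rw [hz]; abel
  have hi1 : ⟪gradient φ x, z - x⟫ = -(1/L) * ⟪gradient φ x, g⟫ := by
    rw [ezx, inner_neg_right, real_inner_smul_right]; ring
  have hn1 : ‖z - x‖ ^ 2 = (1/L)^2 * ‖g‖^2 := by
    rw [ezx, norm_neg, norm_smul]
    rw [mul_pow]
    congr 1
    rw [Real.norm_eq_abs, abs_of_pos (by positivity)]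
  have hi2 : ⟪gradient φ y, z - y⟫ = ⟪gradient φ y, x - y⟫ - (1/L) * ⟪gradient φ y, g⟫ := by
    have : z - y = (x - y) - (1/L) • g := by rw [hz]; abel
    rw [this, inner_sub_right, real_inner_smul_right]
  have hgg : ⟪gradient φ x, g⟫ - ⟪gradient φ y, g⟫ = ‖g‖^2 := by
    rw [← inner_sub_left, ← hg, real_inner_self_eq_norm_sq]
  rw [hi1, hn1] at h1
  rw [hi2] at h2
  have hL' : (0:ℝ) < 2 * L := by linarith
  have key : L / 2 * ((1/L)^2 * ‖g‖^2) = 1/(2*L) * ‖g‖^2 := by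
    field_simp
  have hgg' : 1/L * ⟪gradient φ x, g⟫ - 1/L * ⟪gradient φ y, g⟫ = 1/L * ‖g‖^2 := by
    rw [← mul_sub, hgg]
  have h6 : 1/L * ‖g‖^2 - 1/(2*L) * ‖g‖^2 = 1/(2*L) * ‖g‖^2 := by
    field_simp; ring
  linarith [h1, h2, key, hgg', h6]

/-- co-coercivity -/
lemma cocoercive {d : ℕ} {φ : Vec d → ℝ} (hφ : Differentiable ℝ φ)
    (hc : ConvexOn ℝ Set.univ φ) {L : ℝ} (hL : 0 < L)
    (hLs : ∀ a b : Vec d, ‖gradient φ a - gradient φ b‖ ≤ L * ‖a - b‖) (x y : Vec d) :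
    1 / L * ‖gradient φ x - gradient φ y‖ ^ 2 ≤ ⟪gradient φ x - gradient φ y, x - y⟫ := by
  have h1 := cocoercive_aux hφ hc hL hLs x y
  have h2 := cocoercive_aux hφ hc hL hLs y x
  have hsymm : ‖gradient φ y - gradient φ x‖ = ‖gradient φ x - gradient φ y‖ := norm_sub_rev _ _
  rw [hsymm] at h2
  have e1 : ⟪gradient φ x - gradient φ y, x - y⟫
      = -⟪gradient φ x, y - x⟫ - ⟪gradient φ y, x - y⟫ := by
    rw [inner_sub_left, show y - x = -(x - y) from by abel, inner_neg_right]
    ring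
  have h6 : 1/L * ‖gradient φ x - gradient φ y‖^2
      = 1/(2*L) * ‖gradient φ x - gradient φ y‖^2 + 1/(2*L) * ‖gradient φ x - gradient φ y‖^2 := by
    field_simp; ring
  linarith [h1, h2]

/-- gradient step is nonexpansive when 0 < α ≤ 2/L -/
lemma step_nonexpansive {d : ℕ} {φ : Vec d → ℝ} (hφ : Differentiable ℝ φ)
    (hc : ConvexOn ℝ Set.univ φ) {L α : ℝ} (hL : 0 < L) (hα : 0 < α) (hα2 : α ≤ 2 / L)
    (hLs : ∀ a b : Vec d, ‖gradient φ a - gradient φ b‖ ≤ L * ‖a - b‖) (x y : Vec d) :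
    ‖(x - α • gradient φ x) - (y - α • gradient φ y)‖ ≤ ‖x - y‖ := by
  set g := gradient φ x - gradient φ y with hg
  have he : (x - α • gradient φ x) - (y - α • gradient φ y) = (x - y) - α • g := by
    rw [hg, smul_sub]; abel
  rw [he]
  have hsq : ‖(x - y) - α • g‖ ^ 2 ≤ ‖x - y‖ ^ 2 := by
    rw [norm_sub_sq_real]
    have hi : ⟪x - y, α • g⟫ = α * ⟪g, x - y⟫ := by
      rw [real_inner_smul_right, real_inner_comm]
    have hng : ‖α • g‖ ^ 2 = α ^ 2 * ‖g‖ ^ 2 := by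
      rw [norm_smul, mul_pow, Real.norm_eq_abs, sq_abs]
    rw [hi, hng]
    have hco := cocoercive hφ hc hL hLs x y
    have hαL : α ^ 2 * ‖g‖^2 ≤ 2 * α * (1/L * ‖g‖^2) := by
      have h1 : α * α ≤ (2/L) * α := mul_le_mul_of_nonneg_right hα2 hα.le
      have h2 : α ^ 2 * ‖g‖^2 = (α * α) * ‖g‖^2 := by ring
      have h3 : 2 * α * (1/L * ‖g‖^2) = ((2/L) * α) * ‖g‖^2 := by field_simp
      rw [h2, h3]
      exact mul_le_mul_of_nonneg_right h1 (sq_nonneg _)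
    have h4 : 2 * α * (1/L * ‖g‖^2) ≤ 2 * α * ⟪g, x - y⟫ :=
      mul_le_mul_of_nonneg_left hco (by positivity)
    linarith
  exact le_of_sq_le_sq hsq (norm_nonneg _)

/-- value Lipschitz from gradient bound -/
lemma value_lipschitz {d : ℕ} {φ : Vec d → ℝ} (hφ : Differentiable ℝ φ) {G : ℝ}
    (hG : ∀ x : Vec d, ‖gradient φ x‖ ≤ G) (x y : Vec d) :
    |φ x - φ y| ≤ G * ‖x - y‖ := by
  have hb : ∀ z ∈ (Set.univ : Set (Vec d)), ‖fderiv ℝ φ z‖ ≤ G := by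
    intro z _
    rw [(grad_fderiv hφ z).fderiv]
    rw [LinearIsometryEquiv.norm_map]; exact hG z
  have h := Convex.norm_image_sub_le_of_norm_fderiv_le
    (fun z _ => hφ z) hb convex_univ (Set.mem_univ y) (Set.mem_univ x)
  simpa [Real.norm_eq_abs] using h

section Helpers

lemma sgdoSeq_congr {d n : ℕ} (hn : 0 < n) (f : Fin n → Vec d → ℝ) (α : ℝ) (x0 : Vec d)
    (σ τ : ℕ → Equiv.Perm (Fin n)) (T : ℕ)
    (h : ∀ t, t < T → σ (t / n) ⟨t % n, Nat.mod_lt t hn⟩ = τ (t / n) ⟨t % n, Nat.mod_lt t hn⟩) :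
    sgdoSeq hn f α x0 σ T = sgdoSeq hn f α x0 τ T := by
  induction T with
  | zero => rfl
  | succ t ih =>
    rw [sgdoSeq, sgdoSeq, ih (fun s hs => h s (Nat.lt_succ_of_lt hs)), h t (Nat.lt_succ_self t)]

lemma sgdoSeq_swap_dist {d n : ℕ} (hn : 0 < n) (f : Fin n → Vec d → ℝ) {G α : ℝ}
    (hα : 0 ≤ α) (hG : ∀ (c : Fin n) (x : Vec d), ‖gradient (f c) x‖ ≤ G)
    (hne : ∀ (c : Fin n) (x y : Vec d),
      ‖(x - α • gradient (f c) x) - (y - α • gradient (f c) y)‖ ≤ ‖x - y‖)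
    (x0 : Vec d) (σ τ : ℕ → Equiv.Perm (Fin n)) (t0 : ℕ) :
    ∀ T, t0 < T →
      (∀ t, t < T → t ≠ t0 →
        σ (t / n) ⟨t % n, Nat.mod_lt t hn⟩ = τ (t / n) ⟨t % n, Nat.mod_lt t hn⟩) →
      ‖sgdoSeq hn f α x0 σ T - sgdoSeq hn f α x0 τ T‖ ≤ 2 * α * G := by
  intro T
  induction T with
  | zero => exact fun h => absurd h (Nat.not_lt_zero _)
  | succ T ih =>
    intro hlt h
    rcases Nat.lt_succ_iff_lt_or_eq.mp hlt with h1 | h1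
    · have hcomp := h T (Nat.lt_succ_self T) (by omega)
      rw [sgdoSeq, sgdoSeq, ← hcomp]
      exact le_trans (hne _ _ _) (ih h1 (fun t ht ht' => h t (Nat.lt_succ_of_lt ht) ht'))
    · have hpre : sgdoSeq hn f α x0 σ T = sgdoSeq hn f α x0 τ T :=
        sgdoSeq_congr hn f α x0 σ τ T (fun t ht => h t (Nat.lt_succ_of_lt ht) (by omega))
      rw [sgdoSeq, sgdoSeq, hpre]
      set u := sgdoSeq hn f α x0 τ T with hu
      set g1 := gradient (f (σ (T / n) ⟨T % n, Nat.mod_lt T hn⟩)) u with hg1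
      set g2 := gradient (f (τ (T / n) ⟨T % n, Nat.mod_lt T hn⟩)) u with hg2
      have he : u - α • g1 - (u - α • g2) = α • (g2 - g1) := by rw [smul_sub]; abel
      rw [he, norm_smul, Real.norm_eq_abs, abs_of_nonneg hα]
      have b1 := hG (σ (T / n) ⟨T % n, Nat.mod_lt T hn⟩) u
      have b2 := hG (τ (T / n) ⟨T % n, Nat.mod_lt T hn⟩) u
      rw [← hg1] at b1
      rw [← hg2] at b2
      have hbb : ‖g2 - g1‖ ≤ 2 * G := le_trans (norm_sub_le _ _) (by linarith)
      calc α * ‖g2 - g1‖ ≤ α * (2 * G) := mul_le_mul_of_nonneg_left hbb hα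
      _ = 2 * α * G := by ring

lemma extendPerm_lt {n K : ℕ} (ω : Fin K → Equiv.Perm (Fin n)) {m : ℕ} (h : m < K) :
    extendPerm ω m = ω ⟨m, h⟩ := dif_pos h

lemma extendPerm_update_ne {n K : ℕ} (ω : Fin K → Equiv.Perm (Fin n)) (c : Fin K)
    (π : Equiv.Perm (Fin n)) {m : ℕ} (hm : m ≠ c.1) :
    extendPerm (Function.update ω c π) m = extendPerm ω m := by
  unfold extendPerm
  split
  · rw [Function.update_of_ne (by simp [Fin.ext_iff]; omega)]
  · rfl

lemma extendPerm_update_eq {n K : ℕ} (ω : Fin K → Equiv.Perm (Fin n)) (c : Fin K)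
    (π : Equiv.Perm (Fin n)) :
    extendPerm (Function.update ω c π) c.1 = π := by
  unfold extendPerm
  rw [dif_pos c.isLt]
  have : (⟨c.1, c.isLt⟩ : Fin K) = c := Fin.ext rfl
  rw [this, Function.update_self]

lemma sgdoIter_succ {d n : ℕ} (hn : 0 < n) (f : Fin n → Vec d → ℝ) (α : ℝ) (x0 : Vec d)
    (σ : ℕ → Equiv.Perm (Fin n)) (k : ℕ) (i : Fin n) :
    sgdoIter hn f α x0 σ k ((i : ℕ) + 1)
      = sgdoIter hn f α x0 σ k (i : ℕ)
        - α • gradient (f (σ (k-1) i)) (sgdoIter hn f α x0 σ k (i : ℕ)) := by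
  unfold sgdoIter
  have h1 : (k-1)*n + ((i:ℕ)+1) = (((k-1)*n + (i:ℕ)) + 1) := by omega
  rw [h1, sgdoSeq]
  have hd : ((k-1)*n + (i:ℕ))/n = k-1 := by
    rw [add_comm, Nat.add_mul_div_right _ _ hn, Nat.div_eq_of_lt i.isLt, zero_add]
  have hm : (⟨((k-1)*n + (i:ℕ)) % n, Nat.mod_lt _ hn⟩ : Fin n) = i := by
    apply Fin.ext
    simp only
    rw [add_comm, Nat.add_mul_mod_self_right]
    exact Nat.mod_eq_of_lt i.isLt
  rw [hm, hd]



lemma iter_swap_dist {d n K : ℕ} (hn : 0 < n) (f : Fin n → Vec d → ℝ) {G α : ℝ}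
    (hα : 0 ≤ α) (hG0 : 0 ≤ G)
    (hG : ∀ (j : Fin n) (x : Vec d), ‖gradient (f j) x‖ ≤ G)
    (hne : ∀ (j : Fin n) (x y : Vec d),
      ‖(x - α • gradient (f j) x) - (y - α • gradient (f j) y)‖ ≤ ‖x - y‖)
    (x0 : Vec d) (ω : Fin K → Equiv.Perm (Fin n)) (k : ℕ) (hkK : k - 1 < K)
    (i q : Fin n) :
    ‖sgdoIter hn f α x0 (extendPerm ω) k (i : ℕ)
      - sgdoIter hn f α x0 (extendPerm
          (Function.update ω ⟨k-1, hkK⟩ (ω ⟨k-1, hkK⟩ * Equiv.swap q i))) k (i : ℕ)‖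
      ≤ 2 * α * G := by
  set c : Fin K := ⟨k-1, hkK⟩ with hc
  set ω' := Function.update ω c (ω c * Equiv.swap q i) with hω'
  have hagree : ∀ t, t < (k-1)*n + (i:ℕ) → t ≠ (k-1)*n + (q:ℕ) →
      extendPerm ω (t / n) ⟨t % n, Nat.mod_lt t hn⟩
        = extendPerm ω' (t / n) ⟨t % n, Nat.mod_lt t hn⟩ := by
    intro t ht ht0
    by_cases hcase : t / n = k - 1
    · have hdm := Nat.div_add_mod t n
      rw [hcase, mul_comm] at hdm
      have hr : t % n < (i:ℕ) := by omega
      have hrq : t % n ≠ (q:ℕ) := by omega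
      rw [hcase]
      have e1 : extendPerm ω (k-1) = ω c := by
        rw [extendPerm_lt ω hkK]
      have e2 : extendPerm ω' (k-1) = ω c * Equiv.swap q i := by
        rw [hω']
        exact extendPerm_update_eq ω c _
      rw [e1, e2, Equiv.Perm.mul_apply,
        Equiv.swap_apply_of_ne_of_ne (Fin.ne_of_val_ne hrq) (Fin.ne_of_val_ne (Nat.ne_of_lt hr))]
    · rw [hω', extendPerm_update_ne ω c _ (by simpa using hcase)]
  unfold sgdoIter
  rcases lt_or_ge (q:ℕ) (i:ℕ) with hqi | hqi
  · exact sgdoSeq_swap_dist hn f hα hG hne x0 (extendPerm ω) (extendPerm ω')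
      ((k-1)*n + (q:ℕ)) ((k-1)*n + (i:ℕ)) (by omega) hagree
  · have heq : sgdoSeq hn f α x0 (extendPerm ω) ((k-1)*n + (i:ℕ))
        = sgdoSeq hn f α x0 (extendPerm ω') ((k-1)*n + (i:ℕ)) :=
      sgdoSeq_congr hn f α x0 _ _ _ (fun t ht => hagree t ht (by omega))
    rw [heq, sub_self, norm_zero]
    positivity

/-- **Per-step recursion (no strong convexity).** If `α ≤ 2/L`, then
`E[‖x_(i+1)^k − x*‖²] ≤ E[‖x_i^k − x*‖²] − 2αE[F(x_i^k) − F(x*)] + 5α²G²`. -/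
theorem step_recursion
    (d n K : ℕ) (hn : 0 < n) (hK : 0 < K)
    (f : Fin n → Vec d → ℝ) (G L α : ℝ) (x0 xstar : Vec d)
    (hα : 0 < α) (hα2 : α ≤ 2 / L)
    (hdiff : ∀ i, Differentiable ℝ (f i))
    (hconv : ∀ i, ConvexOn ℝ Set.univ (f i))
    (hGlip : ∀ i x, ‖gradient (f i) x‖ ≤ G)
    (hLsmooth : ∀ i x y, ‖gradient (f i) x - gradient (f i) y‖ ≤ L * ‖x - y‖)
    (hmin : ∀ y, avgF f xstar ≤ avgF f y)
    (k : ℕ) (hk1 : 1 ≤ k) (hkK : k ≤ K) (i : Fin n) :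
    unifExp (fun ω : Fin K → Equiv.Perm (Fin n) => ‖sgdoIter hn f α x0 (extendPerm ω) k ((i : ℕ) + 1) - xstar‖ ^ 2)
      ≤ unifExp (fun ω : Fin K → Equiv.Perm (Fin n) => ‖sgdoIter hn f α x0 (extendPerm ω) k (i : ℕ) - xstar‖ ^ 2)
        - 2 * α * unifExp (fun ω : Fin K → Equiv.Perm (Fin n) => avgF f (sgdoIter hn f α x0 (extendPerm ω) k (i : ℕ)) - avgF f xstar)
        + 5 * α ^ 2 * G ^ 2 := by
  classical
  have hkK' : k - 1 < K := by omega
  have hL : 0 < L := by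
    rcases lt_trichotomy L 0 with h | h | h
    · have : (2:ℝ)/L < 0 := div_neg_of_pos_of_neg two_pos h
      linarith
    · rw [h, div_zero] at hα2; linarith
    · exact h
  have hG0 : 0 ≤ G := le_trans (norm_nonneg _) (hGlip ⟨0, hn⟩ x0)
  have hne : ∀ (j : Fin n) (x y : Vec d),
      ‖(x - α • gradient (f j) x) - (y - α • gradient (f j) y)‖ ≤ ‖x - y‖ :=
    fun j => step_nonexpansive (hdiff j) (hconv j) hL hα hα2 (hLsmooth j)
  set c : Fin K := ⟨k - 1, hkK'⟩ with hc
  set X : (Fin K → Equiv.Perm (Fin n)) → Vec d :=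
    fun ω => sgdoIter hn f α x0 (extendPerm ω) k (i : ℕ) with hX
  set X' : (Fin K → Equiv.Perm (Fin n)) → Vec d :=
    fun ω => sgdoIter hn f α x0 (extendPerm ω) k ((i : ℕ) + 1) with hX'
  set D : (Fin K → Equiv.Perm (Fin n)) → ℝ :=
    fun ω => f (ω c i) (X ω) - f (ω c i) xstar with hD
  -- pointwise step recursion
  have P1 : ∀ ω : Fin K → Equiv.Perm (Fin n),
      ‖X' ω - xstar‖^2 ≤ ‖X ω - xstar‖^2 - 2*α*(D ω) + α^2*G^2 := by
    intro ω
    have hcoe : extendPerm ω (k-1) = ω c := by rw [extendPerm_lt ω hkK']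
    have hstep : X' ω = X ω - α • gradient (f (ω c i)) (X ω) := by
      rw [hX', hX]
      simp only
      rw [sgdoIter_succ hn f α x0 (extendPerm ω) k i, hcoe]
    set j := ω c i with hj
    set x := X ω with hx
    set g := gradient (f j) x with hg
    rw [hstep]
    have he : x - α • g - xstar = (x - xstar) - α • g := by abel
    rw [he, norm_sub_sq_real]
    have hi : ⟪x - xstar, α • g⟫ = α * ⟪g, x - xstar⟫ := by
      rw [real_inner_smul_right, real_inner_comm]
    have hng : ‖α • g‖^2 = α^2 * ‖g‖^2 := by
      rw [norm_smul, mul_pow, Real.norm_eq_abs, sq_abs]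
    rw [hi, hng]
    have hcv := convex_first_order (hdiff j) (hconv j) x xstar
    have hcv' : f j x - f j xstar ≤ ⟪g, x - xstar⟫ := by
      have hneg : ⟪g, xstar - x⟫ = -⟪g, x - xstar⟫ := by
        rw [show xstar - x = -(x - xstar) from by abel, inner_neg_right]
      rw [← hg, hneg] at hcv
      linarith
    have hgb : ‖g‖^2 ≤ G^2 := by
      have h1 := hGlip j x
      nlinarith [norm_nonneg g]
    have hmul : 2*α*(D ω) ≤ 2*α*⟪g, x - xstar⟫ := by
      apply mul_le_mul_of_nonneg_left _ (by linarith : (0:ℝ) ≤ 2*α)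
      exact hcv'
    have hmul2 : α^2 * ‖g‖^2 ≤ α^2 * G^2 := mul_le_mul_of_nonneg_left hgb (sq_nonneg α)
    linarith
  -- coupling map
  set Φ : Fin n → (Fin K → Equiv.Perm (Fin n)) → (Fin K → Equiv.Perm (Fin n)) :=
    fun q ω => Function.update ω c (ω c * Equiv.swap q i) with hΦ
  have hΦinv : ∀ q, Function.Involutive (Φ q) := by
    intro q ω
    funext j'
    by_cases hj : j' = c
    · subst hj
      simp only [hΦ, Function.update_self]
      rw [mul_assoc, Equiv.swap_mul_self, mul_one]
    · simp only [hΦ, Function.update_of_ne hj]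
  have hswap : ∀ (q : Fin n) (ω : Fin K → Equiv.Perm (Fin n)), (Φ q ω) c i = ω c q := by
    intro q ω
    simp only [hΦ, Function.update_self, Equiv.Perm.mul_apply, Equiv.swap_apply_right]
  -- pointwise coupling inequality
  have P2 : ∀ (q : Fin n) (ω : Fin K → Equiv.Perm (Fin n)),
      f (ω c q) (X ω) - f (ω c q) xstar ≤ D (Φ q ω) + 2*α*G^2 := by
    intro q ω
    have hdist : ‖X ω - X (Φ q ω)‖ ≤ 2*α*G := by
      rw [hX]
      exact iter_swap_dist hn f hα.le hG0 hGlip hne x0 ω k hkK' i q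
    have hlip := value_lipschitz (hdiff (ω c q)) (hGlip (ω c q)) (X ω) (X (Φ q ω))
    have hbd : f (ω c q) (X ω) ≤ f (ω c q) (X (Φ q ω)) + 2*α*G^2 := by
      have habs : f (ω c q) (X ω) - f (ω c q) (X (Φ q ω)) ≤ G * (2*α*G) :=
        le_trans (le_abs_self _) (le_trans hlip (mul_le_mul_of_nonneg_left hdist hG0))
      have hre : G * (2*α*G) = 2*α*G^2 := by ring
      linarith [habs, hre.le, hre.ge]
    have hDval : D (Φ q ω) = f (ω c q) (X (Φ q ω)) - f (ω c q) xstar := by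
      rw [hD]
      simp only
      rw [hswap q ω]
    rw [hDval]
    linarith
  -- sums
  set N : ℝ := (Fintype.card (Fin K → Equiv.Perm (Fin n)) : ℝ) with hNdef
  have hN0 : 0 < N := by
    rw [hNdef]
    exact_mod_cast Fintype.card_pos
  have S1 : ∑ ω : Fin K → Equiv.Perm (Fin n), ‖X' ω - xstar‖^2
      ≤ (∑ ω : Fin K → Equiv.Perm (Fin n), ‖X ω - xstar‖^2)
        - 2*α*(∑ ω : Fin K → Equiv.Perm (Fin n), D ω) + N*(α^2*G^2) := by
    calc ∑ ω : Fin K → Equiv.Perm (Fin n), ‖X' ω - xstar‖^2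
        ≤ ∑ ω : Fin K → Equiv.Perm (Fin n), (‖X ω - xstar‖^2 - 2*α*(D ω) + α^2*G^2) :=
          Finset.sum_le_sum (fun ω _ => P1 ω)
      _ = (∑ ω : Fin K → Equiv.Perm (Fin n), ‖X ω - xstar‖^2)
          - 2*α*(∑ ω : Fin K → Equiv.Perm (Fin n), D ω) + N*(α^2*G^2) := by
          rw [Finset.sum_add_distrib, Finset.sum_sub_distrib, Finset.sum_const,
            Finset.card_univ, nsmul_eq_mul, Finset.mul_sum, hNdef]
  have hn0 : (n:ℝ) ≠ 0 := by positivity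
  have S2 : ∑ ω : Fin K → Equiv.Perm (Fin n), (avgF f (X ω) - avgF f xstar)
      ≤ (∑ ω : Fin K → Equiv.Perm (Fin n), D ω) + N*(2*α*G^2) := by
    have hq : ∀ ω : Fin K → Equiv.Perm (Fin n),
        (n:ℝ) * (avgF f (X ω) - avgF f xstar)
          = ∑ q : Fin n, (f (ω c q) (X ω) - f (ω c q) xstar) := by
      intro ω
      rw [Finset.sum_sub_distrib]
      rw [Equiv.sum_comp (ω c) (fun j => f j (X ω)), Equiv.sum_comp (ω c) (fun j => f j xstar)]
      show (n:ℝ) * ((∑ j, f j (X ω))/n - (∑ j, f j xstar)/n)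
        = (∑ j, f j (X ω)) - ∑ j, f j xstar
      field_simp
    have hswitch : ∑ ω : Fin K → Equiv.Perm (Fin n), ∑ q : Fin n, D (Φ q ω)
        = (n:ℝ) * ∑ ω : Fin K → Equiv.Perm (Fin n), D ω := by
      rw [Finset.sum_comm]
      have hfix : ∀ q : Fin n, ∑ ω : Fin K → Equiv.Perm (Fin n), D (Φ q ω)
          = ∑ ω : Fin K → Equiv.Perm (Fin n), D ω :=
        fun q => Fintype.sum_bijective (Φ q) (hΦinv q).bijective _ _ (fun ω => rfl)
      rw [Finset.sum_congr rfl (fun q _ => hfix q), Finset.sum_const, Finset.card_univ,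
        Fintype.card_fin, nsmul_eq_mul]
    have hmul : (n:ℝ) * (∑ ω : Fin K → Equiv.Perm (Fin n), (avgF f (X ω) - avgF f xstar))
        ≤ (n:ℝ) * ((∑ ω : Fin K → Equiv.Perm (Fin n), D ω) + N*(2*α*G^2)) := by
      rw [Finset.mul_sum, Finset.sum_congr rfl (fun ω _ => hq ω)]
      have expand : ∑ ω : Fin K → Equiv.Perm (Fin n), ∑ q : Fin n, (D (Φ q ω) + 2*α*G^2)
          = (∑ ω : Fin K → Equiv.Perm (Fin n), ∑ q : Fin n, D (Φ q ω))
            + N * ((n:ℝ) * (2*α*G^2)) := by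
        rw [hNdef]
        simp only [Finset.sum_add_distrib, Finset.sum_const, Finset.card_univ,
          Fintype.card_fin, nsmul_eq_mul]
        all_goals ring
      calc ∑ ω : Fin K → Equiv.Perm (Fin n), ∑ q : Fin n, (f (ω c q) (X ω) - f (ω c q) xstar)
          ≤ ∑ ω : Fin K → Equiv.Perm (Fin n), ∑ q : Fin n, (D (Φ q ω) + 2*α*G^2) :=
            Finset.sum_le_sum (fun ω _ => Finset.sum_le_sum (fun q _ => P2 q ω))
        _ = (∑ ω : Fin K → Equiv.Perm (Fin n), ∑ q : Fin n, D (Φ q ω))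
            + N * ((n:ℝ) * (2*α*G^2)) := expand
        _ = (n:ℝ) * ((∑ ω : Fin K → Equiv.Perm (Fin n), D ω) + N*(2*α*G^2)) := by
            rw [hswitch]; ring
    have hnpos : (0:ℝ) < n := by positivity
    exact le_of_mul_le_mul_left hmul hnpos
  -- conclusion
  have hexp : 2*α*((∑ ω : Fin K → Equiv.Perm (Fin n), D ω) + N*(2*α*G^2))
      = 2*α*(∑ ω : Fin K → Equiv.Perm (Fin n), D ω) + 4*α^2*G^2*N := by ring
  have hmu : 2*α*(∑ ω : Fin K → Equiv.Perm (Fin n), (avgF f (X ω) - avgF f xstar))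
      ≤ 2*α*((∑ ω : Fin K → Equiv.Perm (Fin n), D ω) + N*(2*α*G^2)) :=
    mul_le_mul_of_nonneg_left S2 (by linarith)
  have hcomb : ∑ ω : Fin K → Equiv.Perm (Fin n), ‖X' ω - xstar‖^2
      ≤ (∑ ω : Fin K → Equiv.Perm (Fin n), ‖X ω - xstar‖^2)
        - 2*α*(∑ ω : Fin K → Equiv.Perm (Fin n), (avgF f (X ω) - avgF f xstar))
        + 5*α^2*G^2*N := by
    linarith [S1, hmu, hexp]
  have hfinal : unifExp (fun ω : Fin K → Equiv.Perm (Fin n) => ‖X' ω - xstar‖^2)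
      ≤ unifExp (fun ω : Fin K → Equiv.Perm (Fin n) => ‖X ω - xstar‖^2)
        - 2*α*unifExp (fun ω : Fin K → Equiv.Perm (Fin n) => avgF f (X ω) - avgF f xstar)
        + 5*α^2*G^2 := by
    simp only [unifExp]
    rw [← hNdef]
    have hrhs : (∑ ω : Fin K → Equiv.Perm (Fin n), ‖X ω - xstar‖^2)/N
          - 2*α*((∑ ω : Fin K → Equiv.Perm (Fin n), (avgF f (X ω) - avgF f xstar))/N)
          + 5*α^2*G^2
        = ((∑ ω : Fin K → Equiv.Perm (Fin n), ‖X ω - xstar‖^2)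
            - 2*α*(∑ ω : Fin K → Equiv.Perm (Fin n), (avgF f (X ω) - avgF f xstar))
            + 5*α^2*G^2*N)/N := by
      field_simp
      all_goals ring
    rw [hrhs]
    exact (div_le_div_iff_of_pos_right hN0).mpr hcomb
  exact hfinal
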